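/- arXiv:1109.4349 — 6 statements merged into one kernel-verified Lean document; each statement's English description precedes it below -/
import Mathlib

section
/- Let G be a group with no proper subgroup of finite index and with finite center Z(G). Then the quotient group G/Z(G) has trivial center. -/
theorem cartan_stmt2 {G : Type*} [Group G]
    (hG : ∀ H : Subgroup G, H.FiniteIndex → H = ⊤)
    (hZ : Finite (Subgroup.center G)) :
    Subgroup.center (G ⧸ Subgroup.center G) = ⊥ := by
  rw [eq_bot_iff]
  intro q hq
  obtain ⟨g, rfl⟩ := QuotientGroup.mk_surjective q
  have hcomm : ∀ x : G, x * g * x⁻¹ * g⁻¹ ∈ Subgroup.center G := by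
    intro x
    rw [← QuotientGroup.eq_one_iff]
    have h := (Subgroup.mem_center_iff.mp hq) (QuotientGroup.mk x)
    show (QuotientGroup.mk x * QuotientGroup.mk g * (QuotientGroup.mk x)⁻¹ *
      (QuotientGroup.mk g)⁻¹ : G ⧸ Subgroup.center G) = 1
    rw [h]
    group
  let φ : G →* Subgroup.center G :=
  { toFun := fun x => ⟨x * g * x⁻¹ * g⁻¹, hcomm x⟩
    map_one' := by ext; simp
    map_mul' := by
      intro x y
      ext
      show (x * y) * g * (x * y)⁻¹ * g⁻¹ = (x * g * x⁻¹ * g⁻¹) * (y * g * y⁻¹ * g⁻¹)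
      have hc := Subgroup.mem_center_iff.mp (hcomm y)
      calc (x * y) * g * (x * y)⁻¹ * g⁻¹
          = x * (y * g * y⁻¹ * g⁻¹) * (g * x⁻¹ * g⁻¹) := by group
        _ = (y * g * y⁻¹ * g⁻¹) * x * (g * x⁻¹ * g⁻¹) := by rw [hc x]
        _ = (y * g * y⁻¹ * g⁻¹) * (x * g * x⁻¹ * g⁻¹) := by group
        _ = (x * g * x⁻¹ * g⁻¹) * (y * g * y⁻¹ * g⁻¹) := (hc _).symm }
  have hker : φ.ker.FiniteIndex := Subgroup.finiteIndex_ker φ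
  have htop := hG φ.ker hker
  have hg : g ∈ Subgroup.center G := by
    refine Subgroup.mem_center_iff.mpr fun x => ?_
    have hx : x ∈ φ.ker := htop ▸ Subgroup.mem_top x
    have h2 : x * g * x⁻¹ * g⁻¹ = 1 := congrArg Subtype.val hx
    have := mul_eq_one_iff_eq_inv.mp h2
    calc x * g = (x * g * x⁻¹ * g⁻¹) * (g * x) := by group
      _ = g * x := by rw [h2, one_mul]
  simpa [Subgroup.mem_bot, QuotientGroup.eq_one_iff] using hg
end

section
/- Let G = G_1 × G_2 be a direct product of two groups. Then the Cartan subgroups of G are exactly the subgroups of the form Q_1 × Q_2, where Q_i is a Cartan subgroup of G_i for i = 1, 2. -/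
/-- A Cartan subgroup in the sense of Chevalley: a maximal nilpotent subgroup such that
every subgroup of it which is normal and of finite index in it has finite index in its
normalizer in the ambient group. -/
def IsCartan {G : Type*} [Group G] (Q : Subgroup G) : Prop :=
  (Group.IsNilpotent Q ∧ ∀ H : Subgroup G, Group.IsNilpotent H → Q ≤ H → H = Q) ∧
  ∀ X : Subgroup G, X ≤ Q → (X.subgroupOf Q).Normal → (X.subgroupOf Q).FiniteIndex →
    (X.subgroupOf (Subgroup.normalizer (X : Set G))).FiniteIndex

/-!
Projecting to the factors preserves nilpotency, so a maximal nilpotent subgroup `Q` of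
`G₁ × G₂` equals the product of its projections. For a product `Q₁ × Q₂` both defining
conditions split factorwise: nilpotency and maximality directly, and the normalizer condition
because `N(X₁ × X₂) = N(X₁) × N(X₂)` and relative indices multiply over products. For a
general normal subgroup `X` of finite index in `Q₁ × Q₂` one passes to the product of its
projections `P₁ × P₂`, which contains `X` with finite index and whose normalizer contains `N(X)`.
-/

open Subgroup

section Cartan

variable {G : Type*} [Group G]

def IsMaximalNilpotent (Q : Subgroup G) : Prop :=
  Group.IsNilpotent Q ∧ ∀ H : Subgroup G, Group.IsNilpotent H → Q ≤ H → H = Q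

def CartanNormalizerCondition (Q : Subgroup G) : Prop :=
  ∀ X : Subgroup G, X ≤ Q → Q ≤ normalizer (X : Set G) → X.relIndex Q ≠ 0 →
    X.relIndex (normalizer (X : Set G)) ≠ 0

theorem isCartan_iff {Q : Subgroup G} :
    IsCartan Q ↔ IsMaximalNilpotent Q ∧ CartanNormalizerCondition Q := by
  refine and_congr Iff.rfl (forall_congr' fun X => forall_congr' fun hXQ => ?_)
  rw [normal_subgroupOf_iff_le_normalizer hXQ, finiteIndex_iff, finiteIndex_iff]
  rfl

end Cartan

section Prod

variable {G₁ G₂ : Type*} [Group G₁] [Group G₂]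

theorem Subgroup.map_fst_prod (A : Subgroup G₁) (B : Subgroup G₂) :
    (A.prod B).map (MonoidHom.fst G₁ G₂) = A := by
  ext a
  exact ⟨fun ⟨_, h, ha⟩ => ha ▸ h.1, fun ha => ⟨(a, 1), ⟨ha, B.one_mem⟩, rfl⟩⟩

theorem Subgroup.map_snd_prod (A : Subgroup G₁) (B : Subgroup G₂) :
    (A.prod B).map (MonoidHom.snd G₁ G₂) = B := by
  ext b
  exact ⟨fun ⟨_, h, hb⟩ => hb ▸ h.2, fun hb => ⟨(1, b), ⟨A.one_mem, hb⟩, rfl⟩⟩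

theorem Subgroup.le_prod_map_fst_map_snd (H : Subgroup (G₁ × G₂)) :
    H ≤ (H.map (MonoidHom.fst G₁ G₂)).prod (H.map (MonoidHom.snd G₁ G₂)) :=
  le_prod_iff.mpr ⟨le_rfl, le_rfl⟩

theorem Subgroup.relIndex_prod (A C : Subgroup G₁) (B D : Subgroup G₂) :
    (A.prod B).relIndex (C.prod D) = A.relIndex C * B.relIndex D := by
  have hcomap : (A.prod B).subgroupOf (C.prod D) =
      ((A.subgroupOf C).prod (B.subgroupOf D)).comap (C.prodEquiv D).toMonoidHom := by
    ext; rfl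
  rw [relIndex, hcomap, index_comap_of_surjective _ (C.prodEquiv D).surjective, index_prod]
  rfl

theorem Subgroup.normalizer_prod (A : Subgroup G₁) (B : Subgroup G₂) :
    normalizer ((A.prod B : Subgroup (G₁ × G₂)) : Set (G₁ × G₂)) =
      (normalizer (A : Set G₁)).prod (normalizer (B : Set G₂)) := by
  refine le_antisymm (le_prod_iff.mpr ⟨?_, ?_⟩) ?_
  · simpa only [map_fst_prod] using le_normalizer_map (H := A.prod B) (MonoidHom.fst G₁ G₂)
  · simpa only [map_snd_prod] using le_normalizer_map (H := A.prod B) (MonoidHom.snd G₁ G₂)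
  · rintro ⟨n₁, n₂⟩ hn
    rw [mem_prod, mem_normalizer_iff, mem_normalizer_iff] at hn
    rw [mem_normalizer_iff]
    rintro ⟨a, b⟩
    exact and_congr (hn.1 a) (hn.2 b)

theorem Group.IsNilpotent.map {G N : Type*} [Group G] [Group N] {H : Subgroup G}
    (hH : Group.IsNilpotent H) (f : G →* N) : Group.IsNilpotent (H.map f) :=
  nilpotent_of_surjective (f.subgroupMap H) (f.subgroupMap_surjective H)

theorem Subgroup.isNilpotent_prod {A : Subgroup G₁} {B : Subgroup G₂}
    (hA : Group.IsNilpotent A) (hB : Group.IsNilpotent B) : Group.IsNilpotent (A.prod B) :=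
  Group.nilpotent_of_mulEquiv (A.prodEquiv B).symm

theorem IsMaximalNilpotent.eq_prod_map {Q : Subgroup (G₁ × G₂)} (hQ : IsMaximalNilpotent Q) :
    Q = (Q.map (MonoidHom.fst G₁ G₂)).prod (Q.map (MonoidHom.snd G₁ G₂)) :=
  (hQ.2 _ (isNilpotent_prod (hQ.1.map _) (hQ.1.map _)) Q.le_prod_map_fst_map_snd).symm

theorem isMaximalNilpotent_prod_iff {A : Subgroup G₁} {B : Subgroup G₂} :
    IsMaximalNilpotent (A.prod B) ↔ IsMaximalNilpotent A ∧ IsMaximalNilpotent B := by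
  constructor
  · rintro ⟨hAB, hmax⟩
    have hA : Group.IsNilpotent A := map_fst_prod A B ▸ hAB.map _
    have hB : Group.IsNilpotent B := map_snd_prod A B ▸ hAB.map _
    refine ⟨⟨hA, fun H hH hAH => ?_⟩, ⟨hB, fun H hH hBH => ?_⟩⟩
    · have := hmax _ (isNilpotent_prod hH hB) (prod_mono hAH le_rfl)
      rw [← map_fst_prod H B, this, map_fst_prod]
    · have := hmax _ (isNilpotent_prod hA hH) (prod_mono le_rfl hBH)
      rw [← map_snd_prod A H, this, map_snd_prod]
  · rintro ⟨⟨hA, hmaxA⟩, ⟨hB, hmaxB⟩⟩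
    refine ⟨isNilpotent_prod hA hB, fun H hH hABH => le_antisymm ?_ hABH⟩
    have h₁ := hmaxA _ (hH.map _) (map_fst_prod A B ▸ map_mono hABH)
    have h₂ := hmaxB _ (hH.map _) (map_snd_prod A B ▸ map_mono hABH)
    exact h₁ ▸ h₂ ▸ H.le_prod_map_fst_map_snd

theorem CartanNormalizerCondition.of_prod_left {A : Subgroup G₁} {B : Subgroup G₂}
    (h : CartanNormalizerCondition (A.prod B)) : CartanNormalizerCondition A := by
  intro X hXA hAX hX
  have := h (X.prod B) (prod_mono hXA le_rfl)
    (normalizer_prod X B ▸ prod_mono hAX le_normalizer)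
    (by rwa [relIndex_prod, relIndex_self, mul_one])
  rw [normalizer_prod, relIndex_prod] at this
  exact left_ne_zero_of_mul this

theorem CartanNormalizerCondition.of_prod_right {A : Subgroup G₁} {B : Subgroup G₂}
    (h : CartanNormalizerCondition (A.prod B)) : CartanNormalizerCondition B := by
  intro X hXB hBX hX
  have := h (A.prod X) (prod_mono le_rfl hXB)
    (normalizer_prod A X ▸ prod_mono le_normalizer hBX)
    (by rwa [relIndex_prod, relIndex_self, one_mul])
  rw [normalizer_prod, relIndex_prod] at this
  exact right_ne_zero_of_mul this

theorem CartanNormalizerCondition.prod {A : Subgroup G₁} {B : Subgroup G₂}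
    (hA : CartanNormalizerCondition A) (hB : CartanNormalizerCondition B) :
    CartanNormalizerCondition (A.prod B) := by
  intro X hXAB hABX hX
  set P₁ := X.map (MonoidHom.fst G₁ G₂)
  set P₂ := X.map (MonoidHom.snd G₁ G₂)
  have hXP : X ≤ P₁.prod P₂ := X.le_prod_map_fst_map_snd
  have hP₁ : P₁ ≤ A := map_fst_prod A B ▸ map_mono hXAB
  have hP₂ : P₂ ≤ B := map_snd_prod A B ▸ map_mono hXAB
  have hAP₁ : A ≤ normalizer (P₁ : Set G₁) :=
    map_fst_prod A B ▸ (map_mono hABX).trans (le_normalizer_map _)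
  have hBP₂ : B ≤ normalizer (P₂ : Set G₂) :=
    map_snd_prod A B ▸ (map_mono hABX).trans (le_normalizer_map _)
  have hPAB : P₁.relIndex A * P₂.relIndex B ≠ 0 :=
    relIndex_prod P₁ A P₂ B ▸ mt (relIndex_eq_zero_of_le_left hXP) hX
  have hXP_fin : X.relIndex (P₁.prod P₂) ≠ 0 :=
    mt (relIndex_eq_zero_of_le_right (prod_mono hP₁ hP₂)) hX
  have hPN_fin : (P₁.prod P₂).relIndex
      ((normalizer (P₁ : Set G₁)).prod (normalizer (P₂ : Set G₂))) ≠ 0 := by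
    rw [relIndex_prod]
    exact mul_ne_zero (hA P₁ hP₁ hAP₁ (left_ne_zero_of_mul hPAB))
      (hB P₂ hP₂ hBP₂ (right_ne_zero_of_mul hPAB))
  have hNX : normalizer (X : Set (G₁ × G₂)) ≤
      (normalizer (P₁ : Set G₁)).prod (normalizer (P₂ : Set G₂)) :=
    le_prod_iff.mpr ⟨le_normalizer_map _, le_normalizer_map _⟩
  exact mt (relIndex_eq_zero_of_le_right hNX) (relIndex_ne_zero_trans hXP_fin hPN_fin)

theorem isCartan_prod_iff {A : Subgroup G₁} {B : Subgroup G₂} :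
    IsCartan (A.prod B) ↔ IsCartan A ∧ IsCartan B := by
  simp only [isCartan_iff, isMaximalNilpotent_prod_iff]
  exact ⟨fun ⟨⟨hA, hB⟩, h⟩ => ⟨⟨hA, h.of_prod_left⟩, ⟨hB, h.of_prod_right⟩⟩,
    fun ⟨⟨hA, hA'⟩, ⟨hB, hB'⟩⟩ => ⟨⟨hA, hB⟩, hA'.prod hB'⟩⟩

end Prod

theorem cartan_stmt4 {G₁ G₂ : Type*} [Group G₁] [Group G₂] (Q : Subgroup (G₁ × G₂)) :
    IsCartan Q ↔
      ∃ (Q₁ : Subgroup G₁) (Q₂ : Subgroup G₂),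
        IsCartan Q₁ ∧ IsCartan Q₂ ∧ Q = Q₁.prod Q₂ := by
  constructor
  · intro hQ
    have hQ_eq : Q = (Q.map (MonoidHom.fst G₁ G₂)).prod (Q.map (MonoidHom.snd G₁ G₂)) :=
      (isCartan_iff.mp hQ).1.eq_prod_map
    obtain ⟨h₁, h₂⟩ := isCartan_prod_iff.mp (hQ_eq ▸ hQ)
    exact ⟨_, _, h₁, h₂, hQ_eq⟩
  · rintro ⟨Q₁, Q₂, h₁, h₂, rfl⟩
    exact isCartan_prod_iff.mpr ⟨h₁, h₂⟩
end

section
/- Let G be a group that is a central product G = G_1 * G_2, i.e., G is generated by two commuting subgroups G_1 and G_2 (so [G_1, G_2] = 1 and G = G_1 G_2). Then the Cartan subgroups of G are exactly the subgroups of the form Q_1 * Q_2 = Q_1 Q_2, where Q_i is a Cartan subgroup of G_i for i = 1, 2. -/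
open Subgroup

namespace Subgroup

section Nilpotent

variable {P G : Type*} [Group P] [Group G]

theorem isNilpotent_map {H : Subgroup P} (hH : Group.IsNilpotent H) (f : P →* G) :
    Group.IsNilpotent (H.map f) :=
  Group.nilpotent_of_surjective (f.subgroupMap H) (f.subgroupMap_surjective H)

theorem isNilpotent_comap_of_ker_le_center {f : P →* G} (hker : f.ker ≤ center P)
    {H : Subgroup G} (hH : Group.IsNilpotent H) : Group.IsNilpotent (H.comap f) :=
  Subgroup.isNilpotent_of_ker_le_center (f.subgroupComap H) fun _ hx ↦
    mem_center_iff.2 fun y ↦ Subtype.ext (mem_center_iff.1 (hker (Subtype.ext_iff.1 hx)) y)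

theorem isNilpotent_prod_s5 {K : Subgroup P} {L : Subgroup G} (hK : Group.IsNilpotent K)
    (hL : Group.IsNilpotent L) : Group.IsNilpotent (K.prod L) :=
  Group.nilpotent_of_mulEquiv (K.prodEquiv L).symm

end Nilpotent

section Prod

variable {G H : Type*} [Group G] [Group H]

theorem map_fst_prod_s5 (K : Subgroup G) (L : Subgroup H) : (K.prod L).map (MonoidHom.fst G H) = K :=
  SetLike.coe_injective <| by
    simp [coe_map, coe_prod, Set.fst_image_prod _ (OneMemClass.coe_nonempty L)]

theorem map_snd_prod_s5 (K : Subgroup G) (L : Subgroup H) : (K.prod L).map (MonoidHom.snd G H) = L :=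
  SetLike.coe_injective <| by
    simp [coe_map, coe_prod, Set.snd_image_prod (OneMemClass.coe_nonempty K)]

theorem normalizer_prod_s5 (K : Subgroup G) (L : Subgroup H) :
    normalizer (K.prod L : Set (G × H)) =
      (normalizer (K : Set G)).prod (normalizer (L : Set H)) := by
  ext ⟨g, h⟩
  simp only [mem_normalizer_iff, mem_prod, Prod.forall, Prod.mk_mul_mk, Prod.inv_mk]
  refine ⟨fun hn ↦ ⟨fun k ↦ ?_, fun l ↦ ?_⟩, fun ⟨hg, hh⟩ k l ↦ and_congr (hg k) (hh l)⟩
  · simpa using hn k 1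
  · simpa using hn 1 l

theorem normalizer_le_prod_normalizer_map (X : Subgroup (G × H)) :
    normalizer (X : Set (G × H)) ≤
      (normalizer (X.map (MonoidHom.fst G H) : Set G)).prod
        (normalizer (X.map (MonoidHom.snd G H) : Set H)) :=
  le_prod_iff.2 ⟨le_normalizer_map _, le_normalizer_map _⟩

theorem relIndex_prod_s5 {K₁ L₁ : Subgroup G} {K₂ L₂ : Subgroup H} :
    (K₁.prod K₂).relIndex (L₁.prod L₂) = K₁.relIndex L₁ * K₂.relIndex L₂ := by
  have : (K₁.prod K₂).subgroupOf (L₁.prod L₂) =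
      ((K₁.subgroupOf L₁).prod (K₂.subgroupOf L₂)).comap (L₁.prodEquiv L₂).toMonoidHom := by
    ext; exact Iff.rfl
  rw [relIndex, this, index_comap_of_surjective _ (L₁.prodEquiv L₂).surjective, index_prod]
  rfl

end Prod

theorem map_prod_noncommCoprod {M N G : Type*} [Group M] [Group N] [Group G] (f : M →* G)
    (g : N →* G) (comm : ∀ m n, Commute (f m) (g n)) (K : Subgroup M) (L : Subgroup N) :
    (K.prod L).map (f.noncommCoprod g comm) = K.map f ⊔ L.map g := by
  refine le_antisymm ?_ (sup_le ?_ ?_)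
  · rintro - ⟨⟨k, l⟩, ⟨hk, hl⟩, rfl⟩
    exact mul_mem (mem_sup_left (mem_map_of_mem f hk)) (mem_sup_right (mem_map_of_mem g hl))
  · rintro - ⟨k, hk, rfl⟩
    exact ⟨(k, 1), ⟨hk, L.one_mem⟩, by simp⟩
  · rintro - ⟨l, hl, rfl⟩
    exact ⟨(1, l), ⟨K.one_mem, hl⟩, by simp⟩

theorem ker_noncommCoprod_subtype_le_center {G : Type*} [Group G] {G₁ G₂ : Subgroup G}
    (hcomm : ∀ a ∈ G₁, ∀ b ∈ G₂, Commute a b) :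
    (G₁.subtype.noncommCoprod G₂.subtype fun a b ↦ hcomm a a.2 b b.2).ker ≤ center (G₁ × G₂) := by
  rintro ⟨a, b⟩ hab
  replace hab : (a : G) * b = 1 := hab
  refine mem_center_iff.2 fun ⟨c, d⟩ ↦ Prod.ext (Subtype.ext ?_) (Subtype.ext ?_)
  · change (c : G) * a = a * c
    rw [eq_inv_of_mul_eq_one_left hab]
    exact (hcomm c c.2 b b.2).inv_right.eq
  · change (d : G) * b = b * d
    rw [eq_inv_of_mul_eq_one_right hab]
    exact (hcomm a a.2 d d.2).inv_left.eq.symm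

end Subgroup

section Cartan

variable {G : Type*} [Group G]

/-- Condition (2) in the definition of a Cartan subgroup, with `relIndex ≠ 0` for finite index.
For `X ≤ Q`, normality of `X` in `Q` means `Q ≤ N(X)`, and then `[N(X) : X] = [N(X) : Q] [Q : X]`,
so `X` has finite index in `N(X)` iff `Q` does. -/
def IsAlmostSelfNormalizing (Q : Subgroup G) : Prop :=
  ∀ X ≤ Q, Q ≤ normalizer (X : Set G) → X.relIndex Q ≠ 0 →
    Q.relIndex (normalizer (X : Set G)) ≠ 0

theorem isCartan_iff_s5 {Q : Subgroup G} :
    IsCartan Q ↔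
      Maximal (fun H : Subgroup G ↦ Group.IsNilpotent H) Q ∧ IsAlmostSelfNormalizing Q := by
  refine and_congr ⟨fun h ↦ ⟨h.1, fun H hH hle ↦ (h.2 H hH hle).le⟩,
    fun h ↦ ⟨h.1, fun H hH hle ↦ le_antisymm (h.2 hH hle) hle⟩⟩ ?_
  refine forall_congr' fun X ↦ forall_congr' fun hXQ ↦ ?_
  rw [normal_subgroupOf_iff_le_normalizer hXQ]
  refine imp_congr_right fun hQN ↦ ?_
  rw [finiteIndex_iff, finiteIndex_iff]
  refine imp_congr_right fun hXQ' ↦ ?_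
  change X.relIndex _ ≠ 0 ↔ _
  rw [← relIndex_mul_relIndex X Q _ hXQ hQN, mul_ne_zero_iff]
  exact and_iff_right hXQ'

end Cartan

section Comap

variable {P G : Type*} [Group P] [Group G] {f : P →* G}

theorem maximal_isNilpotent_comap_iff (hf : Function.Surjective f) (hker : f.ker ≤ center P)
    {Q : Subgroup G} :
    Maximal (fun H : Subgroup P ↦ Group.IsNilpotent H) (Q.comap f) ↔
      Maximal (fun H : Subgroup G ↦ Group.IsNilpotent H) Q := by
  have hQ : (Q.comap f).map f = Q := map_comap_eq_self_of_surjective hf Q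
  refine ⟨fun h ↦ ⟨hQ ▸ isNilpotent_map h.1 f, fun H hH hle ↦ ?_⟩,
    fun h ↦ ⟨isNilpotent_comap_of_ker_le_center hker h.1, fun H hH hle ↦ ?_⟩⟩
  · exact (comap_le_comap_of_surjective hf).1
      (h.2 (isNilpotent_comap_of_ker_le_center hker hH) (comap_mono hle))
  · exact map_le_iff_le_comap.1 (h.2 (isNilpotent_map hH f) (hQ ▸ map_mono hle))

theorem Maximal.comap_map_eq_of_isNilpotent (hker : f.ker ≤ center P) {R : Subgroup P}
    (hR : Maximal (fun H : Subgroup P ↦ Group.IsNilpotent H) R) : (R.map f).comap f = R :=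
  hR.eq_of_ge (isNilpotent_comap_of_ker_le_center hker (isNilpotent_map hR.1 f))
    (le_comap_map f R)

theorem isAlmostSelfNormalizing_comap_iff (hf : Function.Surjective f) {Q : Subgroup G} :
    IsAlmostSelfNormalizing (Q.comap f) ↔ IsAlmostSelfNormalizing Q := by
  constructor
  · intro h X hXQ hQN hXQ'
    have := h (X.comap f) (comap_mono hXQ)
      (comap_normalizer_eq_of_surjective X hf ▸ comap_mono hQN) (relIndex_comap_ne_zero f hXQ')
    rwa [← comap_normalizer_eq_of_surjective X hf, relIndex_comap,
      map_comap_eq_self_of_surjective hf] at this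
  · intro h X hXQ hQN hXQ'
    have hQ : (Q.comap f).map f = Q := map_comap_eq_self_of_surjective hf Q
    have hN : normalizer (X : Set P) ≤ (normalizer (X.map f : Set G)).comap f :=
      map_le_iff_le_comap.1 (le_normalizer_map f)
    have hXQ₁ : X.map f ≤ Q := hQ ▸ map_mono hXQ
    have hQN₁ : Q ≤ normalizer (X.map f : Set G) :=
      hQ ▸ (map_mono hQN).trans (le_normalizer_map f)
    have hXQ₁' : (X.map f).relIndex Q ≠ 0 := by
      rw [← hQ, relIndex_map_map, sup_eq_left.2 (ker_le_comap f Q)]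
      exact fun h0 ↦ hXQ' (relIndex_eq_zero_of_le_left le_sup_left h0)
    exact fun h0 ↦
      relIndex_comap_ne_zero f (h _ hXQ₁ hQN₁ hXQ₁') (relIndex_eq_zero_of_le_right hN h0)

theorem isCartan_comap_iff (hf : Function.Surjective f) (hker : f.ker ≤ center P)
    {Q : Subgroup G} : IsCartan (Q.comap f) ↔ IsCartan Q := by
  rw [isCartan_iff_s5, isCartan_iff_s5, maximal_isNilpotent_comap_iff hf hker,
    isAlmostSelfNormalizing_comap_iff hf]

end Comap

section Prod

variable {G H : Type*} [Group G] [Group H]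

theorem Maximal.eq_prod_map_fst_map_snd {R : Subgroup (G × H)}
    (hR : Maximal (fun R : Subgroup (G × H) ↦ Group.IsNilpotent R) R) :
    R = (R.map (MonoidHom.fst G H)).prod (R.map (MonoidHom.snd G H)) :=
  hR.eq_of_ge (isNilpotent_prod_s5 (isNilpotent_map hR.1 _) (isNilpotent_map hR.1 _))
    (le_prod_iff.2 ⟨le_rfl, le_rfl⟩) |>.symm

theorem maximal_isNilpotent_prod_iff {K : Subgroup G} {L : Subgroup H} :
    Maximal (fun R : Subgroup (G × H) ↦ Group.IsNilpotent R) (K.prod L) ↔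
      Maximal (fun K : Subgroup G ↦ Group.IsNilpotent K) K ∧
        Maximal (fun L : Subgroup H ↦ Group.IsNilpotent L) L := by
  constructor
  · intro h
    have hK : Group.IsNilpotent K := map_fst_prod_s5 K L ▸ isNilpotent_map h.1 _
    have hL : Group.IsNilpotent L := map_snd_prod_s5 K L ▸ isNilpotent_map h.1 _
    have hmax : ∀ (K' : Subgroup G) (L' : Subgroup H), Group.IsNilpotent K' →
        Group.IsNilpotent L' → K ≤ K' → L ≤ L' → K' ≤ K ∧ L' ≤ L := by
      intro K' L' hK' hL' hKK' hLL'
      have := h.2 (isNilpotent_prod_s5 hK' hL') (prod_mono hKK' hLL')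
      exact ⟨map_fst_prod_s5 K' L' ▸ map_fst_prod_s5 K L ▸ map_mono this,
        map_snd_prod_s5 K' L' ▸ map_snd_prod_s5 K L ▸ map_mono this⟩
    exact ⟨⟨hK, fun K' hK' hKK' ↦ (hmax K' L hK' hL hKK' le_rfl).1⟩,
      ⟨hL, fun L' hL' hLL' ↦ (hmax K L' hK hL' le_rfl hLL').2⟩⟩
  · rintro ⟨hK, hL⟩
    refine ⟨isNilpotent_prod_s5 hK.1 hL.1, fun R hR hle ↦ le_prod_iff.2 ⟨?_, ?_⟩⟩
    · exact hK.2 (isNilpotent_map hR _) (map_fst_prod_s5 K L ▸ map_mono hle)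
    · exact hL.2 (isNilpotent_map hR _) (map_snd_prod_s5 K L ▸ map_mono hle)

theorem IsAlmostSelfNormalizing.relIndex_prod_ne_zero {K : Subgroup G} {L : Subgroup H}
    (h : IsAlmostSelfNormalizing (K.prod L)) {X : Subgroup G} {Y : Subgroup H}
    (hXK : X ≤ K) (hYL : Y ≤ L) (hKN : K ≤ normalizer (X : Set G))
    (hLN : L ≤ normalizer (Y : Set H)) (hXK' : X.relIndex K ≠ 0) (hYL' : Y.relIndex L ≠ 0) :
    K.relIndex (normalizer (X : Set G)) ≠ 0 ∧ L.relIndex (normalizer (Y : Set H)) ≠ 0 := by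
  have := h (X.prod Y) (prod_mono hXK hYL) (normalizer_prod_s5 X Y ▸ prod_mono hKN hLN)
    (by rw [relIndex_prod_s5]; exact mul_ne_zero hXK' hYL')
  rwa [normalizer_prod_s5, relIndex_prod_s5, mul_ne_zero_iff] at this

theorem isAlmostSelfNormalizing_prod_iff {K : Subgroup G} {L : Subgroup H} :
    IsAlmostSelfNormalizing (K.prod L) ↔
      IsAlmostSelfNormalizing K ∧ IsAlmostSelfNormalizing L := by
  constructor
  · intro h
    exact ⟨fun X hXK hKN hXK' ↦
        (h.relIndex_prod_ne_zero hXK le_rfl hKN le_normalizer hXK' (by simp)).1,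
      fun Y hYL hLN hYL' ↦
        (h.relIndex_prod_ne_zero le_rfl hYL le_normalizer hLN (by simp) hYL').2⟩
  · rintro ⟨hK, hL⟩ X hXR hRN hXR'
    set X₁ := X.map (MonoidHom.fst G H)
    set X₂ := X.map (MonoidHom.snd G H)
    have hX : X ≤ X₁.prod X₂ := le_prod_iff.2 ⟨le_rfl, le_rfl⟩
    obtain ⟨hXK, hXL⟩ := le_prod_iff.1 hXR
    have hKN : K ≤ normalizer (X₁ : Set G) :=
      map_fst_prod_s5 K L ▸ (map_mono hRN).trans (le_normalizer_map _)
    have hLN : L ≤ normalizer (X₂ : Set H) :=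
      map_snd_prod_s5 K L ▸ (map_mono hRN).trans (le_normalizer_map _)
    have hX' : X₁.relIndex K * X₂.relIndex L ≠ 0 := by
      rw [← relIndex_prod_s5]
      exact fun h0 ↦ hXR' (relIndex_eq_zero_of_le_left hX h0)
    have hN :
        (K.prod L).relIndex ((normalizer (X₁ : Set G)).prod (normalizer (X₂ : Set H))) ≠ 0 := by
      rw [relIndex_prod_s5]
      exact mul_ne_zero (hK X₁ hXK hKN (left_ne_zero_of_mul hX'))
        (hL X₂ hXL hLN (right_ne_zero_of_mul hX'))
    exact fun h0 ↦ hN (relIndex_eq_zero_of_le_right (normalizer_le_prod_normalizer_map X) h0)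

theorem isCartan_prod_iff_s5 {K : Subgroup G} {L : Subgroup H} :
    IsCartan (K.prod L) ↔ IsCartan K ∧ IsCartan L := by
  simp only [isCartan_iff_s5, maximal_isNilpotent_prod_iff, isAlmostSelfNormalizing_prod_iff]
  exact and_and_and_comm

theorem IsCartan.eq_prod_map_fst_map_snd {R : Subgroup (G × H)} (h : IsCartan R) :
    R = (R.map (MonoidHom.fst G H)).prod (R.map (MonoidHom.snd G H)) :=
  (isCartan_iff_s5.1 h).1.eq_prod_map_fst_map_snd

end Prod

theorem isCartan_iff_exists_map_prod {P₁ P₂ G : Type*} [Group P₁] [Group P₂] [Group G]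
    {f : P₁ × P₂ →* G} (hf : Function.Surjective f) (hker : f.ker ≤ center (P₁ × P₂))
    {Q : Subgroup G} :
    IsCartan Q ↔ ∃ (K : Subgroup P₁) (L : Subgroup P₂),
      IsCartan K ∧ IsCartan L ∧ Q = (K.prod L).map f := by
  rw [← isCartan_comap_iff hf hker]
  constructor
  · intro h
    have hR := h.eq_prod_map_fst_map_snd
    rw [hR, isCartan_prod_iff_s5] at h
    exact ⟨_, _, h.1, h.2, by rw [← hR, map_comap_eq_self_of_surjective hf]⟩
  · rintro ⟨K, L, hK, hL, rfl⟩
    have hKL := isCartan_prod_iff_s5.2 ⟨hK, hL⟩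
    rwa [(isCartan_iff_s5.1 hKL).1.comap_map_eq_of_isNilpotent hker]

theorem cartan_stmt5 {G : Type*} [Group G] (G₁ G₂ : Subgroup G)
    (hcomm : ∀ a ∈ G₁, ∀ b ∈ G₂, Commute a b)
    (hgen : ∀ g : G, ∃ a ∈ G₁, ∃ b ∈ G₂, g = a * b)
    (Q : Subgroup G) :
    IsCartan Q ↔
      ∃ (Q₁ : Subgroup G₁) (Q₂ : Subgroup G₂),
        IsCartan Q₁ ∧ IsCartan Q₂ ∧ Q = Q₁.map G₁.subtype ⊔ Q₂.map G₂.subtype := by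
  set φ := G₁.subtype.noncommCoprod G₂.subtype fun a b ↦ hcomm a a.2 b b.2
  have hφ : Function.Surjective φ := fun g ↦ by
    obtain ⟨a, ha, b, hb, rfl⟩ := hgen g
    exact ⟨(⟨a, ha⟩, ⟨b, hb⟩), rfl⟩
  have hmap : ∀ (K : Subgroup G₁) (L : Subgroup G₂),
      (K.prod L).map φ = K.map G₁.subtype ⊔ L.map G₂.subtype :=
    map_prod_noncommCoprod _ _ _
  simp only [isCartan_iff_exists_map_prod hφ (ker_noncommCoprod_subtype_le_center hcomm), hmap]
end

section
/- Let G be a group, G_1 and G_2 two commuting subgroups with G = G_1 G_2, and for a subgroup X ≤ G define π_1(X) = { g ∈ G_1 : ∃ h ∈ G_2, g h ∈ X }. If X is a nilpotent subgroup of G of nilpotency class k, then π_1(X) is a nilpotent subgroup of G_1 of nilpotency class at most k + 1. -/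
/-!
Since G₁ and G₂ commute, multiplication μ : G₁ × G₂ → G, (a, b) ↦ a b, is a homomorphism, and
π₁(X) is the image of T = μ⁻¹(X) under the first projection. The kernel of μ consists of the
pairs (a, a⁻¹) with a ∈ G₁ ∩ G₂, which are central in G₁ × G₂. Hence μ : T → X has central
kernel, so T is nilpotent of class at most k + 1, and so is its homomorphic image π₁(X).
-/

open Subgroup

namespace MonoidHom

variable {M N P : Type*} [Group M] [Group N] [Group P]

theorem ker_noncommCoprod_le_center {f : M →* P} {g : N →* P} (hf : Function.Injective f)
    (hg : Function.Injective g) (comm : ∀ m n, Commute (f m) (g n)) :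
    (f.noncommCoprod g comm).ker ≤ center (M × N) := by
  rintro ⟨m, n⟩ h
  have hm : f m = (g n)⁻¹ := eq_inv_of_mul_eq_one_left h
  have hn : g n = (f m)⁻¹ := eq_inv_of_mul_eq_one_right h
  rw [Subgroup.mem_center_iff]
  rintro ⟨m', n'⟩
  ext
  · apply hf
    simp only [Prod.fst_mul, map_mul, hm]
    exact (comm m' n).inv_right.eq
  · apply hg
    simp only [Prod.snd_mul, map_mul, hn]
    exact (comm m n').inv_left.eq.symm

theorem ker_subgroupComap_le_center {G H : Type*} [Group G] [Group H] (f : G →* H)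
    (hf : f.ker ≤ center G) (K : Subgroup H) : (f.subgroupComap K).ker ≤ center (K.comap f) := by
  intro x hx
  rw [Subgroup.mem_center_iff]
  intro y
  ext
  exact Subgroup.mem_center_iff.mp (hf (congrArg Subtype.val hx : f x = 1)) y

end MonoidHom

theorem cartan_stmt6_general {G : Type*} [Group G] (G₁ G₂ : Subgroup G)
    (hcomm : ∀ a ∈ G₁, ∀ b ∈ G₂, Commute a b)
    (X : Subgroup G) [hX : Group.IsNilpotent X] (k : ℕ)
    (hk : Group.nilpotencyClass X = k) :
    ∃ P : Subgroup G,
      (P : Set G) = {g : G | g ∈ G₁ ∧ ∃ h ∈ G₂, g * h ∈ X} ∧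
      P ≤ G₁ ∧
      ∃ hP : Group.IsNilpotent P, Group.nilpotencyClass P ≤ k + 1 := by
  set μ := G₁.subtype.noncommCoprod G₂.subtype fun a b ↦ hcomm a a.2 b b.2
  have hμ := μ.ker_subgroupComap_le_center
    (MonoidHom.ker_noncommCoprod_le_center G₁.subtype_injective G₂.subtype_injective _) X
  set T := X.comap μ
  have : Group.IsNilpotent T := Subgroup.isNilpotent_of_ker_le_center _ hμ
  set π := (G₁.subtype.comp (MonoidHom.fst G₁ G₂)).comp T.subtype
  refine ⟨π.range, ?_, ?_, Group.nilpotent_of_surjective _ π.rangeRestrict_surjective, ?_⟩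
  · ext g
    constructor
    · rintro ⟨⟨⟨a, b⟩, hab⟩, rfl⟩
      exact ⟨a.2, b, b.2, hab⟩
    · rintro ⟨ha, b, hb, hgb⟩
      exact ⟨⟨(⟨g, ha⟩, ⟨b, hb⟩), hgb⟩, rfl⟩
  · rintro _ ⟨t, rfl⟩
    exact t.1.1.2
  · calc Group.nilpotencyClass π.range ≤ Group.nilpotencyClass T :=
          Group.nilpotencyClass_le_of_surjective _ π.rangeRestrict_surjective
      _ ≤ k + 1 := hk ▸ Group.nilpotencyClass_le_of_ker_le_center _ hμ

theorem cartan_stmt6 {G : Type*} [Group G] (G₁ G₂ : Subgroup G)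
    (hcomm : ∀ a ∈ G₁, ∀ b ∈ G₂, Commute a b)
    (hgen : ∀ g : G, ∃ a ∈ G₁, ∃ b ∈ G₂, g = a * b)
    (X : Subgroup G) [hX : Group.IsNilpotent X] (k : ℕ)
    (hk : Group.nilpotencyClass X = k) :
    ∃ P : Subgroup G,
      (P : Set G) = {g : G | g ∈ G₁ ∧ ∃ h ∈ G₂, g * h ∈ X} ∧
      P ≤ G₁ ∧
      ∃ hP : Group.IsNilpotent P, Group.nilpotencyClass P ≤ k + 1 :=
  cartan_stmt6_general G₁ G₂ hcomm X (hX := hX) k hk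
end

section
/- The subgroup Q_1 of diagonal matrices in SL_2(ℝ) is generous: there exist finitely many (in fact four) elements A_1, A_2, A_3, A_4 ∈ SL_2(ℝ) such that SL_2(ℝ) = ⋃_{i=1}^4 A_i · (Q_1)^{SL_2(ℝ)}, where (Q_1)^{SL_2(ℝ)} is the union of all conjugates of Q_1. -/
abbrev SL2 := Matrix.SpecialLinearGroup (Fin 2) ℝ

instance : Fact (Even (Fintype.card (Fin 2))) := ⟨by norm_num⟩

/-- A diagonal element of `SL₂(ℝ)`. -/
def IsDiag (q : SL2) : Prop :=
  (q : Matrix (Fin 2) (Fin 2) ℝ) 0 1 = 0 ∧ (q : Matrix (Fin 2) (Fin 2) ℝ) 1 0 = 0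

/-!
An element of `SL₂(ℝ)` with `|tr| > 2` has distinct real eigenvalues `l, l⁻¹`; a matrix of
eigenvectors, normalised to determinant one, conjugates it to `diag(l, l⁻¹)`. So it suffices that
for every `M = [[x, y], [z, w]]` one of the four `Aᵢ⁻¹ M` has `|tr| > 2`. These traces are
`x + w`, `y - z`, `x/13 + 13w` and `13z - y/13`. If all four were at most `2` in absolute value,
the first and third would give `|x| ≤ 13/6`, `|w| ≤ 1/6`, the second and fourth `|y| ≤ 13/6`,
`|z| ≤ 1/6`, so `xw - yz ≤ 13/18 < 1`.
-/

open Matrix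

lemma det_coe_fin_two (N : SL2) : N 0 0 * N 1 1 - N 0 1 * N 1 0 = 1 := by
  rw [← det_fin_two]
  exact N.det_coe

lemma exists_mul_eq_one_of_two_lt_abs (t : ℝ) (ht : 2 < |t|) :
    ∃ l m : ℝ, l * m = 1 ∧ l + m = t ∧ l ≠ m := by
  have h4 : 2 ^ 2 < t ^ 2 := sq_lt_sq.2 (by rwa [abs_two])
  set s := √(t ^ 2 - 4)
  have hs : 0 < s := Real.sqrt_pos.2 (by linarith)
  have hs2 : s ^ 2 = t ^ 2 - 4 := Real.sq_sqrt (by linarith)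
  exact ⟨(t + s) / 2, (t - s) / 2, by nlinarith, by ring, by intro h; linarith⟩

lemma exists_conj_isDiag_of_eigenvectors (N : SL2) {l m a b c d : ℝ} (hlm : l * m = 1)
    (hdet : a * d - b * c ≠ 0)
    (hl : N 0 0 * a + N 0 1 * c = l * a ∧ N 1 0 * a + N 1 1 * c = l * c)
    (hm : N 0 0 * b + N 0 1 * d = m * b ∧ N 1 0 * b + N 1 1 * d = m * d) :
    ∃ g q : SL2, IsDiag q ∧ N = g⁻¹ * q * g := by
  set δ := a * d - b * c
  let P : SL2 := ⟨!![a / δ, b; c / δ, d], by rw [det_fin_two_of]; field_simp; ring⟩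
  let q : SL2 := ⟨!![l, 0; 0, m], by simp [det_fin_two_of, hlm]⟩
  refine ⟨P⁻¹, q, ⟨rfl, rfl⟩, ?_⟩
  rw [inv_inv]
  refine eq_mul_inv_of_mul_eq (Subtype.ext ?_)
  change (N : Matrix (Fin 2) (Fin 2) ℝ) * !![a / δ, b; c / δ, d] =
    !![a / δ, b; c / δ, d] * !![l, 0; 0, m]
  rw [eta_fin_two (N : Matrix (Fin 2) (Fin 2) ℝ), mul_fin_two, mul_fin_two]
  ext i j
  fin_cases i <;> fin_cases j <;>
    simp only [Fin.zero_eta, Fin.mk_one, of_apply, cons_val', cons_val_zero, cons_val_one,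
      cons_val_fin_one, mul_zero, add_zero, zero_add] <;>
    field_simp <;> linarith

theorem exists_conj_isDiag_of_two_lt_abs_trace (N : SL2)
    (h : 2 < |(N : Matrix (Fin 2) (Fin 2) ℝ).trace|) :
    ∃ g q : SL2, IsDiag q ∧ N = g⁻¹ * q * g := by
  have hdet := det_coe_fin_two N
  rw [trace_fin_two] at h
  by_cases hy : N 0 1 = 0
  · have hxw : N 0 0 * N 1 1 = 1 := by simpa [hy] using hdet
    have h4 : 2 ^ 2 < (N 0 0 + N 1 1) ^ 2 := sq_lt_sq.2 (by rwa [abs_two])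
    have hne : N 0 0 - N 1 1 ≠ 0 := by
      intro h0
      nlinarith
    refine exists_conj_isDiag_of_eigenvectors N (l := N 0 0) (m := N 1 1) (a := N 0 0 - N 1 1)
      (b := 0) (c := N 1 0) (d := 1) hxw (by simpa using hne)
      ⟨by rw [hy]; ring, by ring⟩ ⟨by rw [hy]; ring, by ring⟩
  · obtain ⟨l, m, hlm, hsum, hne⟩ := exists_mul_eq_one_of_two_lt_abs _ h
    refine exists_conj_isDiag_of_eigenvectors N hlm (a := N 0 1) (b := N 0 1) (c := l - N 0 0)
      (d := m - N 0 0) ?_ ⟨by ring, ?_⟩ ⟨by ring, ?_⟩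
    · rw [show N 0 1 * (m - N 0 0) - N 0 1 * (l - N 0 0) = N 0 1 * (m - l) by ring]
      exact mul_ne_zero hy (sub_ne_zero.2 hne.symm)
    · linear_combination -hdet - l * hsum + hlm
    · linear_combination -hdet - m * hsum + hlm

lemma abs_mul_le_of_abs_add_le {u v : ℝ} (h₁ : |u + v| ≤ 2) (h₂ : |u / 13 + 13 * v| ≤ 2) :
    |u * v| ≤ 13 / 36 := by
  rw [abs_le] at h₁ h₂
  have hu : |u| ≤ 13 / 6 := abs_le.2 ⟨by linarith, by linarith⟩
  have hv : |v| ≤ 1 / 6 := abs_le.2 ⟨by linarith, by linarith⟩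
  calc |u * v| = |u| * |v| := abs_mul u v
    _ ≤ 13 / 6 * (1 / 6) := mul_le_mul hu hv (abs_nonneg v) (by norm_num)
    _ = 13 / 36 := by norm_num

lemma two_lt_abs_of_mul_sub_mul_eq_one {x y z w : ℝ} (h : x * w - y * z = 1) :
    2 < |x + w| ∨ 2 < |y - z| ∨ 2 < |x / 13 + 13 * w| ∨ 2 < |13 * z - y / 13| := by
  by_contra! hle
  obtain ⟨h₁, h₂, h₃, h₄⟩ := hle
  have hxw := abs_mul_le_of_abs_add_le h₁ h₃
  have hyz := abs_mul_le_of_abs_add_le (u := y) (v := -z) (by rwa [← sub_eq_add_neg])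
    (by rwa [← abs_neg, show -(y / 13 + 13 * -z) = 13 * z - y / 13 by ring])
  rw [mul_neg, abs_neg] at hyz
  have htri := abs_sub (x * w) (y * z)
  rw [h, abs_one] at htri
  linarith

/-- The witnesses `A₁, …, A₄` with `a = b = 1/13`. -/
noncomputable def coveringTranslates : Fin 4 → SL2 :=
  ![1, ⟨!![0, 1; -1, 0], by norm_num [det_fin_two_of]⟩,
    ⟨!![13, 0; 0, 13⁻¹], by norm_num [det_fin_two_of]⟩,
    ⟨!![0, -13; 13⁻¹, 0], by norm_num [det_fin_two_of]⟩]

lemma trace_inv_mul (A M : SL2) : ((A⁻¹ * M : SL2) : Matrix (Fin 2) (Fin 2) ℝ).trace =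
    A 1 1 * M 0 0 - A 0 1 * M 1 0 - A 1 0 * M 0 1 + A 0 0 * M 1 1 := by
  rw [Matrix.SpecialLinearGroup.coe_mul, Matrix.SpecialLinearGroup.coe_inv, adjugate_fin_two,
    trace_fin_two]
  simp only [mul_apply, Fin.sum_univ_two, of_apply, cons_val', cons_val_zero, cons_val_one,
    cons_val_fin_one]
  ring

lemma exists_two_lt_abs_trace_inv_mul (M : SL2) :
    ∃ i, 2 < |(((coveringTranslates i)⁻¹ * M : SL2) : Matrix (Fin 2) (Fin 2) ℝ).trace| := by
  simp only [trace_inv_mul]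
  rcases two_lt_abs_of_mul_sub_mul_eq_one (det_coe_fin_two M) with h | h | h | h
  · exact ⟨0, by simpa [coveringTranslates] using h⟩
  · refine ⟨1, h.trans_eq (congrArg abs ?_)⟩
    simp only [coveringTranslates, cons_val, of_apply, cons_val', cons_val_zero, cons_val_one,
      cons_val_fin_one]
    ring
  · refine ⟨2, h.trans_eq (congrArg abs ?_)⟩
    simp only [coveringTranslates, cons_val, of_apply, cons_val', cons_val_zero, cons_val_one,
      cons_val_fin_one]
    ring
  · refine ⟨3, h.trans_eq (congrArg abs ?_)⟩
    simp only [coveringTranslates, cons_val, of_apply, cons_val', cons_val_zero, cons_val_one,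
      cons_val_fin_one]
    ring

theorem cartan_stmt12 :
    ∃ A : Fin 4 → SL2, ∀ M : SL2, ∃ i : Fin 4, ∃ g q : SL2,
      IsDiag q ∧ M = A i * (g⁻¹ * q * g) := by
  refine ⟨coveringTranslates, fun M => ?_⟩
  obtain ⟨i, hi⟩ := exists_two_lt_abs_trace_inv_mul M
  obtain ⟨g, q, hq, hconj⟩ := exists_conj_isDiag_of_two_lt_abs_trace _ hi
  exact ⟨i, g, q, hq, by rw [← hconj, mul_inv_cancel_left]⟩
end

section
/- The subgroup SO_2(ℝ) is not generous in SL_2(ℝ): no finite union of left translates of (SO_2(ℝ))^{SL_2(ℝ)} covers SL_2(ℝ). More precisely, for every A ∈ SL_2(ℝ) the set of x > 0 such that the matrix M_x = [[x^2, x−1],[1, x^{-1}]] satisfies |tr(A^{-1} M_x)| > 2 is unbounded; hence the family { M_x : x > 0 } cannot be covered by finitely many translates of (SO_2(ℝ))^{SL_2(ℝ)}. -/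
/-- A rotation matrix in `SL₂(ℝ)`, i.e. an element of `SO₂(ℝ)`. -/
def IsRot (q : SL2) : Prop :=
  ∃ θ : ℝ, (q : Matrix (Fin 2) (Fin 2) ℝ) =
    !![Real.cos θ, Real.sin θ; -Real.sin θ, Real.cos θ]

/-- The matrix `[[x², x−1], [1, x⁻¹]]`, an element of `SL₂(ℝ)` for `x ≠ 0`. -/
noncomputable def Mx (x : ℝ) (hx : x ≠ 0) : SL2 :=
  ⟨!![x ^ 2, x - 1; 1, x⁻¹], by rw [Matrix.det_fin_two_of]; field_simp; ring⟩

/-!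
A conjugate of a rotation has trace `2 cos θ`, hence of absolute value at most `2`. On the other
hand, for any `B ∈ SL₂(ℝ)`, `tr (B M_x) = B₀₀ x² + B₁₀ x + (B₀₁ - B₁₀) + B₁₁ x⁻¹`, and the first
column of `B` is nonzero, so the polynomial part has positive degree and `|tr (B M_x)| → ∞` as
`x → ∞`. Taking `B = A⁻¹` for each of finitely many translates `A`, a single large `x` escapes
all of them.
-/

open Filter Topology Polynomial

lemma IsRot.abs_trace_conj_le_two {q : SL2} (hq : IsRot q) (g : SL2) :
    |Matrix.trace ((g⁻¹ * q * g : SL2) : Matrix (Fin 2) (Fin 2) ℝ)| ≤ 2 := by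
  obtain ⟨θ, hθ⟩ := hq
  have hg : ((g * g⁻¹ : SL2) : Matrix (Fin 2) (Fin 2) ℝ) = 1 := by simp
  have htrace : Matrix.trace ((g⁻¹ * q * g : SL2) : Matrix (Fin 2) (Fin 2) ℝ) = 2 * Real.cos θ := by
    rw [Matrix.SpecialLinearGroup.coe_mul, Matrix.SpecialLinearGroup.coe_mul,
      Matrix.trace_mul_cycle, ← Matrix.SpecialLinearGroup.coe_mul, hg, one_mul, hθ,
      Matrix.trace_fin_two_of]
    ring
  rw [htrace, abs_mul, abs_two]
  linarith [Real.abs_cos_le_one θ]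

lemma Matrix.SpecialLinearGroup.fin_two_col_zero_ne_zero {R : Type*} [CommRing R] [Nontrivial R]
    (B : Matrix.SpecialLinearGroup (Fin 2) R) : B 0 0 ≠ 0 ∨ B 1 0 ≠ 0 := by
  by_contra! h
  have hdet := B.det_coe
  rw [Matrix.det_fin_two, h.1, h.2] at hdet
  simp at hdet

lemma trace_mul_Mx (B : SL2) (x : ℝ) (hx : x ≠ 0) :
    Matrix.trace ((B * Mx x hx : SL2) : Matrix (Fin 2) (Fin 2) ℝ) =
      B 0 0 * x ^ 2 + B 1 0 * x + (B 0 1 - B 1 0) + B 1 1 * x⁻¹ := by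
  rw [Matrix.SpecialLinearGroup.coe_mul]
  simp only [Mx, Matrix.trace_fin_two, Matrix.mul_apply, Matrix.of_apply, Matrix.cons_val',
    Matrix.cons_val_zero, Matrix.cons_val_one, Matrix.cons_val_fin_one, Fin.sum_univ_two, mul_one]
  ring

lemma zero_lt_degree_quadratic {R : Type*} [Semiring R] {a b c : R} (hab : a ≠ 0 ∨ b ≠ 0) :
    0 < (C a * X ^ 2 + C b * X + C c).degree := by
  rcases eq_or_ne a 0 with rfl | ha
  · simp [degree_linear (hab.resolve_left (not_not.2 rfl))]
  · simp [degree_quadratic ha]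

lemma tendsto_abs_add_atTop {α : Type*} {l : Filter α} {f g : α → ℝ} {c : ℝ}
    (hf : Tendsto (fun a ↦ |f a|) l atTop) (hg : Tendsto g l (𝓝 c)) :
    Tendsto (fun a ↦ |f a + g a|) l atTop := by
  refine tendsto_atTop_mono (fun a ↦ ?_) (hf.atTop_add hg.abs.neg)
  have h := abs_add_le (f a + g a) (-g a)
  rw [add_neg_cancel_right, abs_neg] at h
  linarith

lemma eventually_two_lt_abs_trace_mul_Mx (B : SL2) :
    ∀ᶠ x in atTop, ∀ hx : x ≠ 0,
      2 < |Matrix.trace ((B * Mx x hx : SL2) : Matrix (Fin 2) (Fin 2) ℝ)| := by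
  have hpoly := abs_tendsto_atTop _
    (zero_lt_degree_quadratic (c := B 0 1 - B 1 0) B.fin_two_col_zero_ne_zero)
  have hrest : Tendsto (fun x : ℝ ↦ B 1 1 * x⁻¹) atTop (𝓝 (B 1 1 * 0)) :=
    tendsto_inv_atTop_zero.const_mul _
  filter_upwards [(tendsto_abs_add_atTop hpoly hrest).eventually_gt_atTop 2] with x hbig hx
  rw [trace_mul_Mx]
  simpa using hbig

theorem cartan_stmt13 :
    (∀ A : SL2, ∀ C : ℝ, ∃ x : ℝ, ∃ hx : 0 < x, C < x ∧
        2 < |Matrix.trace ((A⁻¹ * Mx x hx.ne' : SL2) : Matrix (Fin 2) (Fin 2) ℝ)|) ∧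
    (∀ (n : ℕ) (A : Fin n → SL2),
      ¬ ∀ (x : ℝ) (hx : 0 < x), ∃ i : Fin n, ∃ g q : SL2, IsRot q ∧
          Mx x hx.ne' = A i * (g⁻¹ * q * g)) := by
  constructor
  · intro A C
    obtain ⟨x, hxC, hx, htrace⟩ := ((eventually_gt_atTop C).and ((eventually_gt_atTop 0).and
      (eventually_two_lt_abs_trace_mul_Mx A⁻¹))).exists
    exact ⟨x, hx, hxC, htrace hx.ne'⟩
  · intro n A hcover
    obtain ⟨x, hx, htrace⟩ := ((eventually_gt_atTop 0).and
      (eventually_all.2 fun i ↦ eventually_two_lt_abs_trace_mul_Mx (A i)⁻¹)).exists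
    obtain ⟨i, g, q, hq, hMx⟩ := hcover x hx
    have hescape := htrace i hx.ne'
    rw [hMx, inv_mul_cancel_left] at hescape
    exact (hq.abs_trace_conj_le_two g).not_gt hescape
end
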